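/- arXiv:1409.4589 — 3 statements merged into one kernel-verified Lean document; each statement's English description precedes it below -/
import Mathlib

section
/- For every integer d ≥ 2, a polynomial function P on 𝔤_d* is Ad*(G_d)-invariant (equivalently, P(ℓ + ad*_X ℓ) = P(ℓ) for all X ∈ 𝔤_d and ℓ ∈ 𝔤_d*) if and only if P belongs to the ℝ-subalgebra generated by the polynomials z_1, …, z_d, z_1 y_2 − z_2 y_1, z_1 y_4 − z_3 y_3, …, z_1 y_{2d−2} − z_{d−1} y_{2d−3}, and z_1 y_{2d} − (z_2 + ⋯ + z_d) y_{2d−1}, where z_i(ℓ) = ℓ(Z_i) and y_j(ℓ) = ℓ(Y_j) are the coordinate functions with respect to the dual basis. -/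
/-- The coadjoint action of the Lie algebra: `(coad X f) W = f ⁅W, X⁆`. -/
def coad {L : Type*} [LieRing L] [LieAlgebra ℝ L] (X : L) (f : Module.Dual ℝ L) :
    Module.Dual ℝ L where
  toFun W := f ⁅W, X⁆
  map_add' a b := by simp [add_lie]
  map_smul' c a := by simp [smul_lie]

/-- The set `{ad*_X ℓ : X ∈ 𝔤, ℓ ∈ 𝔤*}` of all coadjoint tangent vectors. -/
def adStar (L : Type*) [LieRing L] [LieAlgebra ℝ L] : Set (Module.Dual ℝ L) :=
  {g | ∃ (X : L) (ℓ : Module.Dual ℝ L), g = coad X ℓ}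

/-- Coordinates of a linear functional with respect to the dual basis of `B`;
this identifies `𝔤*` with `ι → ℝ`, carrying the canonical topology. -/
noncomputable def coords {ι : Type*} {L : Type*} [LieRing L] [LieAlgebra ℝ L]
    (B : Module.Basis ι ℝ L) (f : Module.Dual ℝ L) : ι → ℝ := fun a => f (B a)

/-- The cortex `Cor(𝔤*)`: the closure (in the canonical topology of the
finite-dimensional space `𝔤*`, transported to coordinates via the dual basis)
of the set `{ad*_X ℓ : X ∈ 𝔤, ℓ ∈ 𝔤*}`. -/
def corSet {ι : Type*} {L : Type*} [LieRing L] [LieAlgebra ℝ L] (B : Module.Basis ι ℝ L) :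
    Set (Module.Dual ℝ L) :=
  {f | coords B f ∈ closure (coords B '' adStar L)}

/-- Index type for the basis of `𝔤_d`: first component indexes `Z_1,…,Z_d`, the second
the odd `Y`'s `Y_1, Y_3, …, Y_{2d-1}`, the third the even `Y`'s `Y_2, Y_4, …, Y_{2d}`,
and the fourth `X_1,…,X_d`. -/
abbrev Idx (d : ℕ) : Type := Fin d ⊕ (Fin d ⊕ (Fin d ⊕ Fin d))

/-- Index of `Z_{i+1}`. -/
def zI {d : ℕ} (i : Fin d) : Idx d := Sum.inl i
/-- Index of `Y_{2i+1}` (odd-indexed `Y`). -/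
def yoI {d : ℕ} (i : Fin d) : Idx d := Sum.inr (Sum.inl i)
/-- Index of `Y_{2i+2}` (even-indexed `Y`). -/
def yeI {d : ℕ} (i : Fin d) : Idx d := Sum.inr (Sum.inr (Sum.inl i))
/-- Index of `X_{i+1}`. -/
def xI {d : ℕ} (i : Fin d) : Idx d := Sum.inr (Sum.inr (Sum.inr i))

/-- Value of `⁅X_{i+1}, Y_{2i+2}⁆`: `Z_{i+2}` if `i + 1 < d`, and `Z_2 + ⋯ + Z_d`
if `i + 1 = d`. -/
def gdW {d : ℕ} (hd : 2 ≤ d) {V : Type*} [AddCommGroup V] (B : Idx d → V) (i : Fin d) : V :=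
  if h : (i : ℕ) < d - 1 then B (zI ⟨(i : ℕ) + 1, by omega⟩)
  else ∑ m ∈ Finset.univ.filter (fun m : Fin d => 0 < (m : ℕ)), B (zI m)

/-- The bracket `⁅B a, B b⁆` of two basis vectors of `𝔤_d`, given by the structure
constants: `⁅X_i, Y_{2i-1}⁆ = Z_1` for `i = 1,…,d`, `⁅X_k, Y_{2k}⁆ = Z_{k+1}` for
`k = 1,…,d-1`, `⁅X_d, Y_{2d}⁆ = Z_2 + ⋯ + Z_d`, all other brackets of basis
vectors being zero (up to antisymmetry). -/
def gdBr {d : ℕ} (hd : 2 ≤ d) {V : Type*} [AddCommGroup V] (B : Idx d → V) :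
    Idx d → Idx d → V
  | Sum.inr (Sum.inr (Sum.inr i)), Sum.inr (Sum.inl j) =>
      if i = j then B (zI ⟨0, by omega⟩) else 0
  | Sum.inr (Sum.inl j), Sum.inr (Sum.inr (Sum.inr i)) =>
      if i = j then -(B (zI ⟨0, by omega⟩)) else 0
  | Sum.inr (Sum.inr (Sum.inr i)), Sum.inr (Sum.inr (Sum.inl j)) =>
      if i = j then gdW hd B i else 0
  | Sum.inr (Sum.inr (Sum.inl j)), Sum.inr (Sum.inr (Sum.inr i)) =>
      if i = j then -(gdW hd B i) else 0
  | _, _ => 0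

/-- The homogeneous polynomial `Q_d` of degree `d`, evaluated at the odd coordinates
`ηo` (`ηo i = η_{2i+1}`) and the even coordinates `ηe` (`ηe i = η_{2i+2}`):
`Q_d = η_{2d-1}·Σ_{i=1}^{d-1}(η_{2i}·∏_{j=1, j≠i}^{d-1} η_{2j-1})
      − η_{2d}·∏_{j=1}^{d-1} η_{2j-1}`. -/
def Qd (d : ℕ) (hd : 2 ≤ d) (ηo ηe : Fin d → ℝ) : ℝ :=
  ηo ⟨d - 1, by omega⟩ *
      (∑ i ∈ Finset.univ.filter (fun i : Fin d => (i : ℕ) < d - 1),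
        ηe i * ∏ j ∈ Finset.univ.filter (fun j : Fin d => (j : ℕ) < d - 1 ∧ j ≠ i), ηo j)
    - ηe ⟨d - 1, by omega⟩ *
        ∏ j ∈ Finset.univ.filter (fun j : Fin d => (j : ℕ) < d - 1), ηo j


/-!
The coordinates `z_i` and `ζ_k = z_1 y_{2k} - W_k y_{2k-1}`, where `W_k` is the bracket
`⁅X_k, Y_{2k}⁆`, are invariant. Conversely, if `z_1 ≠ 0` the orbit of a point meets the point with
the same `z`, with `y_{2k-1} = x_k = 0` and with `y_{2k} = ζ_k / z_1`; so an invariant `P` is a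
polynomial in `z` and `ζ / z_1`, and clearing denominators gives `z_1 ^ N * P = Φ(z, ζ)`.
The power of `z_1` is then cancelled one factor at a time: if `z_1 * P = Φ(z, ζ)`, then `Φ`
vanishes on the hyperplane `z_1 = 0`, because there `(z, ζ) = (z, -W_k y_{2k-1})` takes every
value at which no `W_k` vanishes; hence `z_1` divides `Φ`.
-/

open MvPolynomial

namespace MvPolynomial

variable {σ τ K : Type*}

theorem eval_aeval [CommSemiring K] (x : τ → K) (g : σ → MvPolynomial τ K)
    (p : MvPolynomial σ K) : eval x (aeval g p) = eval (fun i => eval x (g i)) p :=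
  eval₂Hom_bind₁ _ _ _ _

theorem eq_of_eval_eq_of_eval_ne_zero [CommRing K] [IsDomain K] [Infinite K]
    {p q r : MvPolynomial σ K} (hr : r ≠ 0) (h : ∀ v, eval v r ≠ 0 → eval v p = eval v q) :
    p = q := by
  have : r * (p - q) = 0 := funext fun v => by
    by_cases hv : eval v r = 0
    · simp [hv]
    · simp [h v hv]
  exact sub_eq_zero.mp ((mul_eq_zero.mp this).resolve_left hr)

theorem exists_pow_mul_eval_div_eq [Field K] (i₀ : σ) (G : MvPolynomial (σ ⊕ τ) K) :
    ∃ (N : ℕ) (Φ : MvPolynomial (σ ⊕ τ) K), ∀ (u : σ → K) (v : τ → K), u i₀ ≠ 0 →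
      u i₀ ^ N * eval (Sum.elim u fun k => v k / u i₀) G = eval (Sum.elim u v) Φ := by
  induction G using MvPolynomial.induction_on with
  | C a => exact ⟨0, C a, fun u v _ => by simp⟩
  | add p q hp hq =>
    obtain ⟨N₁, Φ₁, h₁⟩ := hp
    obtain ⟨N₂, Φ₂, h₂⟩ := hq
    refine ⟨N₁ + N₂, X (Sum.inl i₀) ^ N₂ * Φ₁ + X (Sum.inl i₀) ^ N₁ * Φ₂, fun u v hu => ?_⟩
    simp only [map_add, map_mul, map_pow, eval_X, Sum.elim_inl, ← h₁ u v hu, ← h₂ u v hu]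
    ring
  | mul_X p j hp =>
    obtain ⟨N, Φ, h⟩ := hp
    rcases j with j | k
    · refine ⟨N, Φ * X (Sum.inl j), fun u v hu => ?_⟩
      simp only [map_mul, eval_X, Sum.elim_inl, ← h u v hu]
      ring
    · refine ⟨N + 1, Φ * X (Sum.inr k), fun u v hu => ?_⟩
      simp only [map_mul, eval_X, Sum.elim_inr, ← h u v hu]
      field_simp
      ring

variable [DecidableEq σ]

theorem X_dvd_sub_aeval_update_zero [CommRing K] (i : σ) (p : MvPolynomial σ K) :
    X i ∣ p - aeval (Function.update X i 0) p := by
  rw [← Ideal.mem_span_singleton, ← Ideal.Quotient.eq]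
  have : (Ideal.Quotient.mkₐ K (Ideal.span {X i})).comp (AlgHom.id K _) =
      (Ideal.Quotient.mkₐ K _).comp (aeval (Function.update X i 0)) := by
    ext j
    by_cases hj : j = i
    · subst hj; simp
    · simp [hj]
  exact DFunLike.congr_fun this p

theorem eval_aeval_update_X_zero [CommRing K] (i : σ) (v : σ → K) (p : MvPolynomial σ K) :
    eval v (aeval (Function.update X i 0) p) = eval (Function.update v i 0) p := by
  rw [eval_aeval]
  congr
  ext j
  by_cases hj : j = i
  · subst hj; simp
  · simp [hj]

theorem X_dvd_of_eval_eq_zero [CommRing K] [IsDomain K] [Infinite K] {p q : MvPolynomial σ K}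
    (i : σ) (hq : ∃ v, v i = 0 ∧ eval v q ≠ 0)
    (h : ∀ v, v i = 0 → eval v q ≠ 0 → eval v p = 0) : X i ∣ p := by
  have hp : aeval (Function.update (X : σ → MvPolynomial σ K) i 0) p = 0 := by
    obtain ⟨v₀, hv₀, hqv₀⟩ := hq
    refine eq_of_eval_eq_of_eval_ne_zero (r := aeval (Function.update X i 0) q) ?_
      fun v hv => ?_
    · intro h0
      apply hqv₀
      have := congrArg (eval v₀) h0
      rwa [eval_aeval_update_X_zero, ← hv₀, Function.update_eq_self, map_zero] at this
    · rw [eval_aeval_update_X_zero] at hv ⊢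
      simpa using h _ (by simp) hv
  have := X_dvd_sub_aeval_update_zero i p
  rwa [hp, sub_zero] at this

end MvPolynomial

section Coadjoint

variable {ι L : Type*} [Fintype ι] [LieRing L] [LieAlgebra ℝ L]

theorem coad_basis_apply (B : Module.Basis ι ℝ L) (X : L) (ℓ : Module.Dual ℝ L) (a : ι) :
    coad X ℓ (B a) = ∑ b, B.repr X b * ℓ ⁅B a, B b⁆ := by
  calc ℓ ⁅B a, X⁆ = ℓ ⁅B a, ∑ b, B.repr X b • B b⁆ := by rw [B.sum_repr]
    _ = _ := by simp only [lie_sum, lie_smul, map_sum, map_smul, smul_eq_mul]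

def coadStep (br : (ι → ℝ) → ι → ι → ℝ) (f c : ι → ℝ) : ι → ℝ :=
  fun a => f a + ∑ b, c b * br f a b

theorem forall_eval_coords_coad_iff (B : Module.Basis ι ℝ L) (br : (ι → ℝ) → ι → ι → ℝ)
    (hbr : ∀ (ℓ : Module.Dual ℝ L) a b, ℓ ⁅B a, B b⁆ = br (coords B ℓ) a b)
    (P : MvPolynomial ι ℝ) :
    (∀ (X : L) (ℓ : Module.Dual ℝ L),
        eval (coords B (ℓ + coad X ℓ)) P = eval (coords B ℓ) P) ↔
      ∀ f c : ι → ℝ, eval (coadStep br f c) P = eval f P := by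
  have coords_add_coad (X : L) (ℓ : Module.Dual ℝ L) :
      coords B (ℓ + coad X ℓ) = coadStep br (coords B ℓ) (B.repr X) := by
    ext a
    simp [coords, coadStep, coad_basis_apply, hbr]
  refine ⟨fun h f c => ?_, fun h X ℓ => coords_add_coad X ℓ ▸ h _ _⟩
  have hf : coords B (B.constr ℝ f) = f := funext (B.constr_basis ℝ f)
  have hc : ⇑(B.repr (B.equivFun.symm c)) = c := B.equivFun.apply_symm_apply c
  have := h (B.equivFun.symm c) (B.constr ℝ f)
  rwa [coords_add_coad, hf, hc] at this

end Coadjoint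

namespace Gd

variable {d : ℕ} (hd : 2 ≤ d)

abbrev zOne : Idx d := zI ⟨0, Nat.zero_lt_of_lt hd⟩

section Maps

variable {V W F : Type*} [AddCommGroup V] [AddCommGroup W] [FunLike F V W]
  [AddMonoidHomClass F V W]

theorem map_gdW (φ : F) (B : Idx d → V) (k : Fin d) :
    φ (gdW hd B k) = gdW hd (fun a => φ (B a)) k := by
  unfold gdW
  split_ifs <;> simp [map_sum]

theorem map_gdBr (φ : F) (B : Idx d → V) (a b : Idx d) :
    φ (gdBr hd B a b) = gdBr hd (fun c => φ (B c)) a b := by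
  rcases a with _ | _ | _ | _ <;> rcases b with _ | _ | _ | _ <;>
    simp [gdBr, apply_ite φ, map_gdW]

end Maps

theorem gdW_congr {V : Type*} [AddCommGroup V] {B B' : Idx d → V}
    (h : ∀ i, B (zI i) = B' (zI i)) (k : Fin d) : gdW hd B k = gdW hd B' k := by
  simp only [gdW, h]

theorem gdW_pos {V : Type*} [AddCommGroup V] [PartialOrder V] [IsOrderedAddMonoid V]
    {B : Idx d → V} (hB : ∀ i : Fin d, 0 < (i : ℕ) → 0 < B (zI i)) (k : Fin d) :
    0 < gdW hd B k := by
  unfold gdW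
  split_ifs
  · exact hB _ (Nat.succ_pos _)
  · exact Finset.sum_pos (fun m hm => hB m (Finset.mem_filter.mp hm).2)
      ⟨⟨1, by omega⟩, by simp⟩

abbrev step (f c : Idx d → ℝ) : Idx d → ℝ := coadStep (gdBr hd) f c

section Step

variable (f c : Idx d → ℝ)

theorem step_zI (i : Fin d) : step hd f c (zI i) = f (zI i) := by
  simp [coadStep, gdBr, zI]

theorem step_yoI (k : Fin d) : step hd f c (yoI k) = f (yoI k) - c (xI k) * f (zOne hd) := by
  simp only [yoI, coadStep, gdBr, Fintype.sum_sum_type, mul_zero, Finset.sum_const_zero, mul_ite,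
    mul_neg, Finset.sum_ite_eq', Finset.mem_univ, ↓reduceIte, zero_add, xI, zOne]
  ring

theorem step_yeI (k : Fin d) : step hd f c (yeI k) = f (yeI k) - c (xI k) * gdW hd f k := by
  simp only [yeI, coadStep, gdBr, Fintype.sum_sum_type, mul_zero, Finset.sum_const_zero, mul_ite,
    mul_neg, Finset.sum_ite_eq', Finset.mem_univ, ↓reduceIte, zero_add, xI]
  ring

theorem step_xI (i : Fin d) :
    step hd f c (xI i) = f (xI i) + c (yoI i) * f (zOne hd) + c (yeI i) * gdW hd f i := by
  simp only [xI, coadStep, gdBr, Fintype.sum_sum_type, mul_zero, Finset.sum_const_zero, mul_ite,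
    Finset.sum_ite_eq, Finset.mem_univ, ↓reduceIte, add_zero, zero_add, yoI, zOne, yeI]
  ring

end Step

section Invariants

variable {R S : Type*} [CommRing R] [CommRing S]

def zeta (f : Idx d → R) (k : Fin d) : R :=
  f (zOne hd) * f (yeI k) - gdW hd f k * f (yoI k)

def invariants (f : Idx d → R) : Fin d ⊕ Fin d → R :=
  Sum.elim (fun i => f (zI i)) (zeta hd f)

theorem map_invariants (φ : R →+* S) (f : Idx d → R) (a : Fin d ⊕ Fin d) :
    φ (invariants hd f a) = invariants hd (fun b => φ (f b)) a := by
  rcases a with i | k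
  · rfl
  · simp [invariants, zeta, map_gdW]

end Invariants

noncomputable def generators : Fin d ⊕ Fin d → MvPolynomial (Idx d) ℝ := invariants hd X

theorem eval_generators (f : Idx d → ℝ) :
    (fun a => eval f (generators hd a)) = invariants hd f :=
  funext fun a => by
    rw [generators, map_invariants]
    simp only [eval_X]

theorem invariants_step (f c : Idx d → ℝ) : invariants hd (step hd f c) = invariants hd f := by
  have hW (k : Fin d) : gdW hd (step hd f c) k = gdW hd f k :=
    gdW_congr hd (step_zI hd f c) k
  ext (i | k)
  · exact step_zI hd f c i
  · simp only [invariants, Sum.elim_inr, zeta, hW, step_yoI, step_yeI]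
    rw [zOne, step_zI]
    ring

def slice {R : Type*} [Zero R] (u v : Fin d → R) : Idx d → R :=
  Sum.elim u (Sum.elim 0 (Sum.elim v 0))

theorem exists_step_eq_slice (f : Idx d → ℝ) (hf : f (zOne hd) ≠ 0) :
    ∃ c, step hd f c = slice (fun i => f (zI i)) fun k => zeta hd f k / f (zOne hd) := by
  refine ⟨Sum.elim 0 (Sum.elim (fun i => -f (xI i) / f (zOne hd))
    (Sum.elim 0 fun k => f (yoI k) / f (zOne hd))), ?_⟩
  ext (i | k | k | i)
  · exact step_zI hd _ _ i
  · refine (step_yoI hd f _ k).trans ?_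
    simp [slice, xI, hf]
  · refine (step_yeI hd f _ k).trans ?_
    simp only [xI, Sum.elim_inr, slice, zeta, Sum.elim_inl]
    field_simp
  · refine (step_xI hd f _ i).trans ?_
    simp [slice, yoI, yeI, hf]

theorem exists_X_pow_mul_mem (P : MvPolynomial (Idx d) ℝ)
    (hP : ∀ f c, eval (step hd f c) P = eval f P) :
    ∃ N : ℕ, X (zOne hd) ^ N * P ∈ (aeval (R := ℝ) (generators hd)).range := by
  obtain ⟨N, Φ, hΦ⟩ := exists_pow_mul_eval_div_eq (K := ℝ) (τ := Fin d)
    (⟨0, by omega⟩ : Fin d) (aeval (slice (fun i => X (Sum.inl i)) fun k => X (Sum.inr k)) P)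
  refine ⟨N, Φ, eq_of_eval_eq_of_eval_ne_zero (X_ne_zero (zOne hd)) fun f hf => ?_⟩
  rw [eval_X] at hf
  obtain ⟨c, hc⟩ := exists_step_eq_slice hd f hf
  have hslice : (fun a => eval (Sum.elim (fun i => f (zI i)) fun k => zeta hd f k / f (zOne hd))
      (slice (fun i => X (Sum.inl i)) (fun k => X (Sum.inr k)) a)) =
      slice (fun i => f (zI i)) fun k => zeta hd f k / f (zOne hd) := by
    ext (i | k | k | i) <;> simp [slice]
  calc eval f (aeval (generators hd) Φ) = eval (invariants hd f) Φ := by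
        rw [eval_aeval, eval_generators]
    _ = f (zOne hd) ^ N * eval (step hd f c) P := by
      rw [invariants, ← hΦ _ _ hf, eval_aeval, hslice, hc]
    _ = eval f (X (zOne hd) ^ N * P) := by simp [hP]

theorem mem_range_of_X_mul_mem {P : MvPolynomial (Idx d) ℝ}
    (hP : X (zOne hd) * P ∈ (aeval (R := ℝ) (generators hd)).range) :
    P ∈ (aeval (R := ℝ) (generators hd)).range := by
  obtain ⟨Φ, hΦ⟩ := (AlgHom.mem_range _).mp hP
  let zX : Fin d → MvPolynomial (Fin d ⊕ Fin d) ℝ := fun i => X (Sum.inl i)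
  have eval_W (v : Fin d ⊕ Fin d → ℝ) (k : Fin d) :
      eval v (gdW hd (slice zX 0) k) = gdW hd (slice (fun i => v (Sum.inl i)) 0) k := by
    rw [map_gdW]
    exact gdW_congr hd (fun i => eval_X (Sum.inl i)) k
  have hdvd : X (Sum.inl ⟨0, by omega⟩) ∣ Φ := by
    refine X_dvd_of_eval_eq_zero (q := ∏ k, gdW hd (slice zX 0) k) _
      ⟨Sum.elim (fun i => (i : ℝ)) 0, by simp, ?_⟩ fun v hv hW => ?_
    · simp only [map_prod, eval_W]
      refine (Finset.prod_pos fun k _ => gdW_pos hd (fun i hi => ?_) k).ne'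
      simpa [slice, zI] using hi
    -- a point with `z_1 = 0` whose invariants are `v`
    let f : Idx d → ℝ := Sum.elim (fun i => v (Sum.inl i))
      (Sum.elim (fun k => -v (Sum.inr k) / gdW hd (slice (fun i => v (Sum.inl i)) 0) k) 0)
    have hf₀ : f (zOne hd) = 0 := hv
    have hf : invariants hd f = v := by
      simp only [map_prod, eval_W] at hW
      ext (i | k)
      · rfl
      · have hWk := Finset.prod_ne_zero_iff.mp hW k (Finset.mem_univ k)
        have hWf : gdW hd f k = gdW hd (slice (fun i => v (Sum.inl i)) 0) k :=
          gdW_congr hd (fun _ => rfl) k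
        simp only [invariants, Sum.elim_inr, zeta, hWf, hf₀, zero_mul, zero_sub]
        change -(_ * (-v (Sum.inr k) / _)) = _
        field_simp
    calc eval v Φ = eval f (aeval (generators hd) Φ) := by rw [eval_aeval, eval_generators, hf]
      _ = 0 := by rw [hΦ, map_mul, eval_X, hf₀, zero_mul]
  obtain ⟨Ψ, rfl⟩ := hdvd
  refine (AlgHom.mem_range _).mpr ⟨Ψ, mul_left_cancel₀ (X_ne_zero (zOne hd)) ?_⟩
  rw [← hΦ, map_mul, aeval_X]
  rfl

theorem mem_range_of_X_pow_mul_mem (N : ℕ) {P : MvPolynomial (Idx d) ℝ}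
    (hP : X (zOne hd) ^ N * P ∈ (aeval (R := ℝ) (generators hd)).range) :
    P ∈ (aeval (R := ℝ) (generators hd)).range := by
  induction N generalizing P with
  | zero => simpa using hP
  | succ n ih =>
    rw [pow_succ, mul_assoc] at hP
    exact mem_range_of_X_mul_mem hd (ih hP)

theorem forall_eval_step_iff (P : MvPolynomial (Idx d) ℝ) :
    (∀ f c, eval (step hd f c) P = eval f P) ↔ P ∈ (aeval (R := ℝ) (generators hd)).range := by
  refine ⟨fun hP => ?_, ?_⟩
  · obtain ⟨N, hN⟩ := exists_X_pow_mul_mem hd P hP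
    exact mem_range_of_X_pow_mul_mem hd N hN
  · rintro ⟨Φ, rfl⟩ f c
    change eval _ (aeval (generators hd) Φ) = eval f (aeval (generators hd) Φ)
    rw [eval_aeval, eval_aeval, eval_generators, eval_generators, invariants_step]

theorem range_generators :
    Set.range (generators hd) =
      {Q : MvPolynomial (Idx d) ℝ |
        (∃ i : Fin d, Q = X (zI i)) ∨
        (∃ k : Fin d, ∃ hk : (k : ℕ) < d - 1,
          Q = X (zI ⟨0, Nat.zero_lt_of_lt hd⟩) * X (yeI k)
              - X (zI ⟨(k : ℕ) + 1, Nat.add_lt_of_lt_sub hk⟩) * X (yoI k)) ∨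
        Q = X (zI ⟨0, Nat.zero_lt_of_lt hd⟩)
              * X (yeI ⟨d - 1, Nat.sub_lt (Nat.zero_lt_of_lt hd) Nat.one_pos⟩)
            - (∑ m ∈ Finset.univ.filter (fun m : Fin d => 0 < (m : ℕ)), X (zI m))
              * X (yoI ⟨d - 1, Nat.sub_lt (Nat.zero_lt_of_lt hd) Nat.one_pos⟩)} := by
  ext Q
  constructor
  · rintro ⟨i | k, rfl⟩
    · exact Or.inl ⟨i, rfl⟩
    · by_cases hk : (k : ℕ) < d - 1
      · exact Or.inr (Or.inl ⟨k, hk, by simp [generators, invariants, zeta, gdW, hk]⟩)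
      · obtain rfl : k = ⟨d - 1, Nat.sub_lt (Nat.zero_lt_of_lt hd) Nat.one_pos⟩ :=
          Fin.ext (by simp only; omega)
        exact Or.inr (Or.inr (by simp [generators, invariants, zeta, gdW]))
  · rintro (⟨i, rfl⟩ | ⟨k, hk, rfl⟩ | rfl)
    · exact ⟨Sum.inl i, rfl⟩
    · exact ⟨Sum.inr k, by simp [generators, invariants, zeta, gdW, hk]⟩
    · exact ⟨Sum.inr ⟨d - 1, by omega⟩, by simp [generators, invariants, zeta, gdW]⟩

end Gd

/-- For every `d ≥ 2`, a polynomial function `P` on `𝔤_d*` (in dual-basis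
coordinates) is `Ad*(G_d)`-invariant, i.e. `P(ℓ + ad*_X ℓ) = P(ℓ)` for all `X, ℓ`, if and
only if `P` belongs to the `ℝ`-subalgebra generated by `z_1,…,z_d`,
`z_1 y_{2k} − z_{k+1} y_{2k−1}` (`k = 1,…,d−1`) and
`z_1 y_{2d} − (z_2 + ⋯ + z_d) y_{2d−1}`. -/
theorem invariant_polynomials_gd (d : ℕ) (hd : 2 ≤ d) (L : Type) [LieRing L]
    [LieAlgebra ℝ L] (B : Module.Basis (Idx d) ℝ L)
    (hbr : ∀ a b : Idx d, ⁅B a, B b⁆ = gdBr hd (fun c => B c) a b)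
    (P : MvPolynomial (Idx d) ℝ) :
    (∀ (X : L) (ℓ : Module.Dual ℝ L),
        MvPolynomial.eval (coords B (ℓ + coad X ℓ)) P = MvPolynomial.eval (coords B ℓ) P)
      ↔ P ∈ Algebra.adjoin ℝ
          {Q : MvPolynomial (Idx d) ℝ |
            (∃ i : Fin d, Q = MvPolynomial.X (zI i)) ∨
            (∃ k : Fin d, ∃ hk : (k : ℕ) < d - 1,
              Q = MvPolynomial.X (zI ⟨0, by omega⟩) * MvPolynomial.X (yeI k)
                  - MvPolynomial.X (zI ⟨(k : ℕ) + 1, by omega⟩) * MvPolynomial.X (yoI k)) ∨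
            Q = MvPolynomial.X (zI ⟨0, by omega⟩) * MvPolynomial.X (yeI ⟨d - 1, by omega⟩)
                - (∑ m ∈ Finset.univ.filter (fun m : Fin d => 0 < (m : ℕ)),
                    MvPolynomial.X (zI m))
                  * MvPolynomial.X (yoI ⟨d - 1, by omega⟩)} := by
  rw [← Gd.range_generators hd, Algebra.adjoin_range_eq_range_aeval,
    forall_eval_coords_coad_iff B (gdBr hd) (fun ℓ a b => by rw [hbr, Gd.map_gdBr]; rfl)]
  exact Gd.forall_eval_step_iff hd P
end

section
/- For every integer d ≥ 2 and every ℓ ∈ 𝔤_d* with ℓ(Z_1) ≠ 0, the tangent space of the coadjoint orbit at ℓ satisfies {ad*_X ℓ : X ∈ 𝔤_d} = {ad*_X ℓ : X ∈ span(Y_1, Y_3, …, Y_{2d−1}, X_1, …, X_d)}; that is, every coadjoint tangent vector at ℓ is realized by an element of the 2d-dimensional subspace spanned by Y_{2k−1} and X_k, k = 1,…,d. -/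
/-!
`ad*_X ℓ` is linear in `X`, so it suffices to realize `ad*_X ℓ` for the basis vectors.
The `Z_k` are central, so `ad*_{Z_k} ℓ = 0`. The only basis vector not commuting with `Y_{2k}`
(resp. `Y_{2k-1}`) is `X_k`, with bracket `W_k = ⁅X_k, Y_{2k}⁆` (resp. `Z_1`); hence
`ad*_{Y_{2k}} ℓ = (ℓ(W_k) / ℓ(Z_1)) • ad*_{Y_{2k-1}} ℓ` as `ℓ(Z_1) ≠ 0`.
-/

open Module

section Coadjoint

variable {L : Type*} [LieRing L] [LieAlgebra ℝ L]

@[simp]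
lemma coad_apply (X : L) (ℓ : Dual ℝ L) (W : L) : coad X ℓ W = ℓ ⁅W, X⁆ := rfl

noncomputable def coadLinear (ℓ : Dual ℝ L) : L →ₗ[ℝ] Dual ℝ L where
  toFun X := coad X ℓ
  map_add' a b := by ext W; simp [lie_add]
  map_smul' c a := by ext W; simp [lie_smul]

@[simp]
lemma coadLinear_apply (ℓ : Dual ℝ L) (X : L) : coadLinear ℓ X = coad X ℓ := rfl

end Coadjoint

lemma LinearMap.range_eq_map_of_basis {R M N ι : Type*} [Semiring R] [AddCommMonoid M]
    [AddCommMonoid N] [Module R M] [Module R N] (B : Basis ι R M) (f : M →ₗ[R] N)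
    (V : Submodule R M) (h : ∀ a, f (B a) ∈ V.map f) : LinearMap.range f = V.map f := by
  refine le_antisymm ?_ LinearMap.map_le_range
  rw [LinearMap.range_eq_map, ← B.span_eq, Submodule.map_span, Submodule.span_le]
  rintro _ ⟨_, ⟨a, rfl⟩, rfl⟩
  exact h a

section Gd

variable {d : ℕ} (hd : 2 ≤ d) {L : Type*} [LieRing L] [LieAlgebra ℝ L]
  (B : Basis (Idx d) ℝ L) (hbr : ∀ a b : Idx d, ⁅B a, B b⁆ = gdBr hd (fun c => B c) a b)

include hbr

lemma coad_basis_zI (ℓ : Dual ℝ L) (i : Fin d) : coad (B (zI i)) ℓ = 0 := by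
  refine B.ext fun w => ?_
  rw [coad_apply, hbr]
  rcases w with _ | _ | _ | _ <;> simp [gdBr, zI]

lemma coad_basis_yeI (ℓ : Dual ℝ L) (hℓ : ℓ (B (zI ⟨0, by omega⟩)) ≠ 0) (i : Fin d) :
    coad (B (yeI i)) ℓ
      = (ℓ (gdW hd (fun c => B c) i) / ℓ (B (zI ⟨0, by omega⟩))) • coad (B (yoI i)) ℓ := by
  refine B.ext fun w => ?_
  simp only [LinearMap.smul_apply, coad_apply, smul_eq_mul, hbr]
  rcases w with j | j | j | j
  all_goals simp only [gdBr, yoI, yeI]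
  · simp
  · simp
  · simp
  · split_ifs with hji
    · subst hji
      field_simp
    · simp

end Gd

/-- For every `d ≥ 2` and `ℓ ∈ 𝔤_d*` with `ℓ(Z_1) ≠ 0`, every coadjoint
tangent vector `ad*_X ℓ` is already realized by some
`X ∈ span(Y_1, Y_3, …, Y_{2d−1}, X_1, …, X_d)`. -/
theorem tangent_space_gd (d : ℕ) (hd : 2 ≤ d) (L : Type) [LieRing L] [LieAlgebra ℝ L]
    (B : Module.Basis (Idx d) ℝ L)
    (hbr : ∀ a b : Idx d, ⁅B a, B b⁆ = gdBr hd (fun c => B c) a b)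
    (ℓ : Module.Dual ℝ L) (hℓ : ℓ (B (zI ⟨0, by omega⟩)) ≠ 0) :
    {g : Module.Dual ℝ L | ∃ X : L, g = coad X ℓ}
      = {g : Module.Dual ℝ L |
          ∃ X ∈ Submodule.span ℝ
              ((Set.range fun i : Fin d => B (yoI i)) ∪
                (Set.range fun i : Fin d => B (xI i))),
            g = coad X ℓ} := by
  set V := Submodule.span ℝ
    ((Set.range fun i : Fin d => B (yoI i)) ∪ (Set.range fun i : Fin d => B (xI i)))
  have hyo (i : Fin d) : B (yoI i) ∈ V := Submodule.subset_span (Or.inl ⟨i, rfl⟩)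
  have hx (i : Fin d) : B (xI i) ∈ V := Submodule.subset_span (Or.inr ⟨i, rfl⟩)
  have key : LinearMap.range (coadLinear ℓ) = V.map (coadLinear ℓ) := by
    refine LinearMap.range_eq_map_of_basis B _ V ?_
    rintro (i | i | i | i)
    · change coad (B (zI i)) ℓ ∈ _
      rw [coad_basis_zI hd B hbr ℓ i]
      exact zero_mem _
    · exact Submodule.mem_map_of_mem (hyo i)
    · change coad (B (yeI i)) ℓ ∈ _
      rw [coad_basis_yeI hd B hbr ℓ hℓ i]
      exact Submodule.smul_mem _ _ (Submodule.mem_map_of_mem (hyo i))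
    · exact Submodule.mem_map_of_mem (hx i)
  ext g
  simpa [eq_comm] using SetLike.ext_iff.mp key g
end

section
/- For every integer d ≥ 2, the cortex Cor(𝔤_d*) is strictly contained in 𝔷_d^⊥: one has Cor(𝔤_d*) ⊆ 𝔷_d^⊥, and there exists ℓ ∈ 𝔷_d^⊥ (for example ℓ with ℓ(Y_{2j−1}) = 1 for j = 1,…,d, ℓ(Y_{2j}) = 0 for j = 1,…,d−1, ℓ(Y_{2d}) = 1, and all other coordinates 0) that does not belong to Cor(𝔤_d*). -/
/-!
Each `Z_i` is central, so every `ad*_X f` vanishes on the centre, and so does the closure.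
For strictness, `ad*_X f` has `Y_{2j-1}`-coordinate `-x_j f(Z_1)` and `Y_{2j}`-coordinate
`-x_j f(W_j)` with `W_j = ⁅X_j, Y_{2j}⁆`, and `W_d = W_1 + ⋯ + W_{d-1}`. This forces the
continuous polynomial `Q_d` to vanish on all `ad*_X f`, hence on the cortex, while `Q_d(ℓ) = -1`.
-/

lemma coad_apply_s14 {L : Type*} [LieRing L] [LieAlgebra ℝ L] (X W : L) (f : Module.Dual ℝ L) :
    coad X f W = f ⁅W, X⁆ := rfl

lemma corSet_subset_of_isClosed {ι L : Type*} [LieRing L] [LieAlgebra ℝ L]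
    (B : Module.Basis ι ℝ L) {S : Set (ι → ℝ)} (hS : IsClosed S)
    (h : ∀ (X : L) (f : Module.Dual ℝ L), coords B (coad X f) ∈ S) :
    corSet B ⊆ coords B ⁻¹' S := by
  refine fun ℓ hℓ => closure_minimal ?_ hS hℓ
  rintro _ ⟨_, ⟨X, f, rfl⟩, rfl⟩
  exact h X f

lemma lie_eq_sum_repr_smul_lie {R ι L : Type*} [CommRing R] [Fintype ι] [LieRing L]
    [LieAlgebra R L] (B : Module.Basis ι R L) (Y X : L) :
    ⁅Y, X⁆ = ∑ b, B.repr X b • ⁅Y, B b⁆ := by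
  conv_lhs => rw [← B.sum_repr X]
  simp only [lie_sum, lie_smul]

lemma gdW_last_eq_sum {d : ℕ} (hd : 2 ≤ d) {V : Type*} [AddCommGroup V] (B : Idx d → V) :
    gdW hd B ⟨d - 1, by omega⟩ =
      ∑ i ∈ Finset.univ.filter (fun i : Fin d => (i : ℕ) < d - 1), gdW hd B i := by
  rw [gdW, dif_neg (lt_irrefl _)]
  symm
  refine Finset.sum_bij' (fun i hi => ⟨i + 1, by simp at hi; omega⟩)
    (fun m hm => ⟨m - 1, by omega⟩) ?_ ?_ ?_ ?_ ?_ <;>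
    intro i hi <;> simp only [Finset.mem_filter, Finset.mem_univ, true_and] at hi
  · simp
  · simp; omega
  · ext; simp
  · ext; simp; omega
  · simp [gdW, hi]

lemma Qd_mul_eq_zero (d : ℕ) (hd : 2 ≤ d) (t c : Fin d → ℝ) (a : ℝ)
    (hc : c ⟨d - 1, by omega⟩ =
      ∑ i ∈ Finset.univ.filter (fun i : Fin d => (i : ℕ) < d - 1), c i) :
    Qd d hd (fun j => t j * a) (fun j => t j * c j) = 0 := by
  set S := Finset.univ.filter (fun i : Fin d => (i : ℕ) < d - 1)
  have hterm : ∀ i ∈ S, a * (t i * c i *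
      ∏ j ∈ Finset.univ.filter (fun j : Fin d => (j : ℕ) < d - 1 ∧ j ≠ i), t j * a) =
        c i * ∏ j ∈ S, t j * a := by
    intro i hi
    have hS : Finset.univ.filter (fun j : Fin d => (j : ℕ) < d - 1 ∧ j ≠ i) = S.erase i := by
      ext j; simp [S, and_comm]
    rw [hS, ← Finset.mul_prod_erase S (fun j => t j * a) hi]
    ring
  rw [Qd, mul_assoc, Finset.mul_sum, Finset.sum_congr rfl hterm, ← Finset.sum_mul, ← hc]
  ring

lemma continuous_Qd (d : ℕ) (hd : 2 ≤ d) {ι : Type*} (yo ye : Fin d → ι) :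
    Continuous fun η : ι → ℝ => Qd d hd (fun i => η (yo i)) (fun i => η (ye i)) := by
  unfold Qd
  fun_prop

section
variable {d : ℕ} (hd : 2 ≤ d) {L : Type*} [LieRing L] [LieAlgebra ℝ L]
  {B : Module.Basis (Idx d) ℝ L}
  (hbr : ∀ a b : Idx d, ⁅B a, B b⁆ = gdBr hd (fun c => B c) a b)
include hbr

lemma gd_lie_zI_eq_zero (i : Fin d) (X : L) : ⁅B (zI i), X⁆ = 0 := by
  rw [lie_eq_sum_repr_smul_lie B]
  refine Finset.sum_eq_zero fun b _ => ?_
  rcases b with _ | _ | _ | _ <;> simp [hbr, zI, gdBr]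

lemma gd_lie_yoI (j : Fin d) (X : L) :
    ⁅B (yoI j), X⁆ = -B.repr X (xI j) • B (zI ⟨0, by omega⟩) := by
  rw [lie_eq_sum_repr_smul_lie B]
  simp [hbr, yoI, xI, gdBr]

lemma gd_lie_yeI (j : Fin d) (X : L) :
    ⁅B (yeI j), X⁆ = -B.repr X (xI j) • gdW hd (fun c => B c) j := by
  rw [lie_eq_sum_repr_smul_lie B]
  simp [hbr, yeI, xI, gdBr]

lemma gd_Qd_coad_eq_zero (X : L) (f : Module.Dual ℝ L) :
    Qd d hd (fun j => coad X f (B (yoI j))) (fun j => coad X f (B (yeI j))) = 0 := by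
  simp only [coad_apply_s14, gd_lie_yoI hd hbr, gd_lie_yeI hd hbr, map_smul, smul_eq_mul]
  exact Qd_mul_eq_zero d hd _ _ _ (by rw [gdW_last_eq_sum, map_sum])

end

noncomputable def gdWitness {d : ℕ} {L : Type*} [LieRing L] [LieAlgebra ℝ L]
    (B : Module.Basis (Idx d) ℝ L) : Module.Dual ℝ L :=
  B.constr ℝ (Sum.elim 0 (Sum.elim 1 (Sum.elim (fun j => if (j : ℕ) = d - 1 then 1 else 0) 0)))

lemma Qd_gdWitness {d : ℕ} (hd : 2 ≤ d) {L : Type*} [LieRing L] [LieAlgebra ℝ L]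
    (B : Module.Basis (Idx d) ℝ L) :
    Qd d hd (fun j => gdWitness B (B (yoI j))) (fun j => gdWitness B (B (yeI j))) = -1 := by
  rw [Qd, Finset.sum_eq_zero fun i hi => ?_]
  · simp [gdWitness, yoI, yeI]
  · simp only [Finset.mem_filter] at hi
    simp [gdWitness, yeI, hi.2.ne]

/-- For every `d ≥ 2`, the cortex `Cor(𝔤_d*)` is strictly contained in
`𝔷_d^⊥`: it is contained in it, and the functional `ℓ` with `ℓ(Y_{2j−1}) = 1` for
`j = 1,…,d`, `ℓ(Y_{2j}) = 0` for `j = 1,…,d−1`, `ℓ(Y_{2d}) = 1` and all other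
coordinates `0` belongs to `𝔷_d^⊥` but not to `Cor(𝔤_d*)`. -/
theorem cortex_proper_gd (d : ℕ) (hd : 2 ≤ d) (L : Type) [LieRing L] [LieAlgebra ℝ L]
    (B : Module.Basis (Idx d) ℝ L)
    (hbr : ∀ a b : Idx d, ⁅B a, B b⁆ = gdBr hd (fun c => B c) a b) :
    corSet B ⊆ {ℓ : Module.Dual ℝ L | ∀ i : Fin d, ℓ (B (zI i)) = 0}
    ∧ ∃ ℓ : Module.Dual ℝ L,
        (∀ i : Fin d, ℓ (B (zI i)) = 0) ∧
        (∀ j : Fin d, ℓ (B (yoI j)) = 1) ∧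
        (∀ j : Fin d, (j : ℕ) < d - 1 → ℓ (B (yeI j)) = 0) ∧
        ℓ (B (yeI ⟨d - 1, by omega⟩)) = 1 ∧
        (∀ k : Fin d, ℓ (B (xI k)) = 0) ∧
        ℓ ∉ corSet B := by
  refine ⟨fun ℓ hℓ i => ?_, gdWitness B, ?_, ?_, ?_, ?_, ?_, fun hℓ => ?_⟩
  · exact corSet_subset_of_isClosed B (S := {η | η (zI i) = 0})
      (isClosed_eq (continuous_apply _) continuous_const)
      (fun X f => show f ⁅B (zI i), X⁆ = 0 by rw [gd_lie_zI_eq_zero hd hbr, map_zero]) hℓ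
  · intro i; simp [gdWitness, zI]
  · intro j; simp [gdWitness, yoI]
  · intro j hj; simp [gdWitness, yeI, hj.ne]
  · simp [gdWitness, yeI]
  · intro k; simp [gdWitness, xI]
  · have hQ : Qd d hd (fun j => gdWitness B (B (yoI j))) (fun j => gdWitness B (B (yeI j))) = 0 :=
      corSet_subset_of_isClosed B (isClosed_eq (continuous_Qd d hd yoI yeI) continuous_const)
        (gd_Qd_coad_eq_zero hd hbr) hℓ
    rw [Qd_gdWitness] at hQ
    norm_num at hQ
end
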